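/- arXiv:2111.12237 — 13 statements merged into one kernel-verified Lean document; each statement's English description precedes it below -/
import Mathlib

section
/- If V < p(S) (the value to be distributed is strictly less than the total principal), then the strategy profile K = S (all players cash out) is a pure strategy Nash equilibrium of the Liquidity Event game, and it is the unique pure strategy Nash equilibrium. -/
open Finset

variable {ι : Type*} [DecidableEq ι]

/-- `f(X) = β + Σ_{i ∈ X} α_i`. -/
noncomputable def fval (β : ℝ) (α : ι → ℝ) (X : Finset ι) : ℝ := β + ∑ i ∈ X, α i

/-- `p(X) = Σ_{i ∈ X} p_i`. -/
noncomputable def psum (p : ι → ℝ) (X : Finset ι) : ℝ := ∑ i ∈ X, p i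

/-- The payout `U_i(K)` in the Liquidity Event game, where `K ⊆ S` is the set of players
who cash out.  For `i ∈ K` it is `p_i` if `p(K) ≤ V` and the pro-rata `p_i·V/p(K)` otherwise;
for a converting player `i ∈ S \ K` it is `(p_i/(γ_i·f(S\K)))·(V − P(K))`
where `P(K) = min(p(K), V)` is the total cashout payment. -/
noncomputable def payout (S : Finset ι) (V β : ℝ) (p γ α : ι → ℝ)
    (K : Finset ι) (i : ι) : ℝ :=
  if i ∈ K then (if psum p K ≤ V then p i else p i * V / psum p K)
  else (p i / (γ i * fval β α (S \ K))) * (V - min (psum p K) V)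

/-- The profile obtained from `K` when player `i` unilaterally changes their move. -/
def deviate (K : Finset ι) (i : ι) : Finset ι := if i ∈ K then K.erase i else insert i K

/-- `K` is a pure strategy Nash equilibrium of the Liquidity Event game. -/
def isNash (S : Finset ι) (V β : ℝ) (p γ α : ι → ℝ) (K : Finset ι) : Prop :=
  K ⊆ S ∧ ∀ i ∈ S, payout S V β p γ α (deviate K i) i ≤ payout S V β p γ α K i

/-- `g(K) = (V − p(K)) / f(S \ K)`. -/
noncomputable def gval (S : Finset ι) (V β : ℝ) (p α : ι → ℝ) (K : Finset ι) : ℝ :=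
  (V - psum p K) / fval β α (S \ K)

/-- Condition (WD): for every nonempty `C ⊆ S`, `Σ_{i∈C} p_i/(γ_i·f(C)) < 1`. -/
def WD (S : Finset ι) (β : ℝ) (p γ α : ι → ℝ) : Prop :=
  ∀ C ⊆ S, C.Nonempty → ∑ i ∈ C, p i / (γ i * fval β α C) < 1


lemma fval_pos' {ι : Type*} [DecidableEq ι] {S : Finset ι} (β : ℝ) (hβ : 0 < β) (α : ι → ℝ)
    (hα : ∀ i ∈ S, 0 ≤ α i) {X : Finset ι} (hX : X ⊆ S) : 0 < fval β α X := by
  have h : 0 ≤ ∑ i ∈ X, α i := Finset.sum_nonneg fun i hi => hα i (hX hi)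
  unfold fval; linarith

/-- if `V < p(S)` then `K = S` (all players cash out) is a Nash equilibrium,
and it is the unique one. -/
theorem stmt0_all_cashout_unique_nash
    (S : Finset ι) (hS : S.Nonempty)
    (V β : ℝ) (hV : 0 < V) (hβ : 0 < β)
    (p γ α : ι → ℝ)
    (hp : ∀ i ∈ S, 0 < p i) (hγ : ∀ i ∈ S, 0 < γ i) (hα : ∀ i ∈ S, 0 ≤ α i)
    (hwd : WD S β p γ α)
    (hVlt : V < psum p S) :
    isNash S V β p γ α S ∧ ∀ K : Finset ι, isNash S V β p γ α K → K = S := by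
  have hpS : 0 < psum p S := Finset.sum_pos (fun i hi => hp i hi) hS
  have hkey : ∀ K : Finset ι, isNash S V β p γ α K → K ≠ S → False := by
    intro K hK hne
    obtain ⟨hKS, hNash⟩ := hK
    have hC : (S \ K).Nonempty := by
      rw [Finset.sdiff_nonempty]
      intro h
      exact hne (Finset.Subset.antisymm hKS h)
    have hF : 0 < fval β α (S \ K) := fval_pos' β hβ α hα Finset.sdiff_subset
    have hpK0 : 0 ≤ psum p K := Finset.sum_nonneg fun i hi => (hp i (hKS hi)).le
    by_cases hpKV : psum p K < V
    · -- case p(K) < V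
      have hterm : ∀ j ∈ S \ K, 0 < p j / (γ j * fval β α (S \ K)) := by
        intro j hj
        have hjS : j ∈ S := (Finset.mem_sdiff.mp hj).1
        exact div_pos (hp j hjS) (mul_pos (hγ j hjS) hF)
      have hc : ∑ j ∈ S \ K, p j / (γ j * fval β α (S \ K)) < 1 :=
        hwd _ Finset.sdiff_subset hC
      have hpay : ∀ j ∈ S \ K, payout S V β p γ α K j
          = (p j / (γ j * fval β α (S \ K))) * (V - psum p K) := by
        intro j hj
        have hjK : j ∉ K := (Finset.mem_sdiff.mp hj).2
        simp [payout, hjK, min_eq_left hpKV.le]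
      by_cases hall : ∀ j ∈ S \ K, psum p K + p j ≤ V
      · have hsum : ∑ j ∈ S \ K, p j
            ≤ ∑ j ∈ S \ K, (p j / (γ j * fval β α (S \ K))) * (V - psum p K) := by
          apply Finset.sum_le_sum
          intro j hj
          have hjS : j ∈ S := (Finset.mem_sdiff.mp hj).1
          have hjK : j ∉ K := (Finset.mem_sdiff.mp hj).2
          have hNj := hNash j hjS
          rw [hpay j hj] at hNj
          have hdev : deviate K j = insert j K := by simp [deviate, hjK]
          rw [hdev] at hNj
          have hps : psum p (insert j K) = p j + psum p K := by
            unfold psum; rw [Finset.sum_insert hjK]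
          have hle : psum p (insert j K) ≤ V := by rw [hps]; linarith [hall j hj]
          simpa [payout, hle] using hNj
        have hsplit : ∑ j ∈ S \ K, p j + psum p K = psum p S := by
          unfold psum; exact Finset.sum_sdiff hKS
        rw [← Finset.sum_mul] at hsum
        nlinarith [hsum, hsplit, hc, hpKV]
      · push_neg at hall
        obtain ⟨i, hi, hgt⟩ := hall
        have hiS : i ∈ S := (Finset.mem_sdiff.mp hi).1
        have hiK : i ∉ K := (Finset.mem_sdiff.mp hi).2
        have hci : p i / (γ i * fval β α (S \ K)) ≤ ∑ j ∈ S \ K, p j / (γ j * fval β α (S \ K)) :=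
          Finset.single_le_sum (fun j hj => (hterm j hj).le) hi
        have hui : payout S V β p γ α K i < V - psum p K := by
          rw [hpay i hi]
          calc (p i / (γ i * fval β α (S \ K))) * (V - psum p K)
              ≤ (∑ j ∈ S \ K, p j / (γ j * fval β α (S \ K))) * (V - psum p K) := by
                apply mul_le_mul_of_nonneg_right hci; linarith
            _ < 1 * (V - psum p K) := by
                apply mul_lt_mul_of_pos_right hc; linarith
            _ = V - psum p K := one_mul _
        have hNi := hNash i hiS
        have hdev : deviate K i = insert i K := by simp [deviate, hiK]
        rw [hdev] at hNi
        have hps : psum p (insert i K) = p i + psum p K := by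
          unfold psum; rw [Finset.sum_insert hiK]
        have hnle : ¬ psum p (insert i K) ≤ V := by rw [hps]; linarith
        have hpos : 0 < psum p (insert i K) := by rw [hps]; nlinarith [hp i hiS]
        rw [payout, if_pos (Finset.mem_insert_self i K), if_neg hnle] at hNi
        have hlt : p i * V / psum p (insert i K) < V - psum p K := lt_of_le_of_lt hNi hui
        rw [div_lt_iff₀ hpos, hps] at hlt
        nlinarith [hp i hiS, hpK0, hgt]
    · -- case p(K) ≥ V
      obtain ⟨i, hi⟩ := hC
      have hiS : i ∈ S := (Finset.mem_sdiff.mp hi).1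
      have hiK : i ∉ K := (Finset.mem_sdiff.mp hi).2
      have hmin : min (psum p K) V = V := min_eq_right (le_of_not_gt hpKV)
      have hu : payout S V β p γ α K i = 0 := by
        simp [payout, hiK, hmin]
      have hNi := hNash i hiS
      have hdev : deviate K i = insert i K := by simp [deviate, hiK]
      rw [hdev, hu] at hNi
      have hps : psum p (insert i K) = p i + psum p K := by
        unfold psum; rw [Finset.sum_insert hiK]
      have hnle : ¬ psum p (insert i K) ≤ V := by
        rw [hps]; push_neg; nlinarith [hp i hiS, le_of_not_gt hpKV]
      have hpos : 0 < psum p (insert i K) := by rw [hps]; nlinarith [hp i hiS]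
      rw [payout, if_pos (Finset.mem_insert_self i K), if_neg hnle] at hNi
      have : 0 < p i * V / psum p (insert i K) := div_pos (mul_pos (hp i hiS) hV) hpos
      linarith
  constructor
  · refine ⟨Finset.Subset.refl S, fun i hi => ?_⟩
    have hdev : deviate S i = S.erase i := by simp [deviate, hi]
    have hiE : i ∉ S.erase i := Finset.notMem_erase i S
    have hsd : S \ S.erase i = {i} := by
      ext j
      simp only [Finset.mem_sdiff, Finset.mem_erase, Finset.mem_singleton, not_and]
      constructor
      · rintro ⟨hjS, h2⟩
        by_contra hji
        exact hji (by tauto)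
      · rintro rfl; exact ⟨hi, fun h => absurd rfl h⟩
    have hF : (0:ℝ) < β + α i := by linarith [hα i hi]
    have hwdI : p i / (γ i * (β + α i)) < 1 := by
      have := hwd {i} (by simpa using hi) (Finset.singleton_nonempty i)
      simpa [fval] using this
    have hnle : ¬ psum p S ≤ V := not_le.mpr hVlt
    have hE : psum p (S.erase i) = psum p S - p i := by
      unfold psum
      rw [← Finset.add_sum_erase S p hi]; ring
    have hR : payout S V β p γ α S i = p i * V / psum p S := by
      simp [payout, hi, hnle]
    rw [hdev, hR, payout, if_neg hiE, hsd]
    have hfs : fval β α {i} = β + α i := by simp [fval]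
    rw [hfs]
    have hc0 : 0 ≤ p i / (γ i * (β + α i)) :=
      le_of_lt (div_pos (hp i hi) (mul_pos (hγ i hi) hF))
    by_cases hEV : psum p (S.erase i) ≤ V
    · rw [min_eq_left hEV]
      have h1 : (p i / (γ i * (β + α i))) * (V - psum p (S.erase i)) ≤ V - psum p (S.erase i) := by
        nlinarith
      have hgoal : V - psum p (S.erase i) ≤ p i * V / psum p S := by
        rw [le_div_iff₀ hpS, hE]
        have hpi : p i ≤ psum p S := by
          unfold psum
          exact Finset.single_le_sum (fun j hj => (hp j hj).le) hi
        nlinarith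
      linarith
    · rw [min_eq_right (le_of_not_ge hEV)]
      have : (0:ℝ) ≤ p i * V / psum p S := div_nonneg (mul_nonneg (hp i hi).le hV.le) hpS.le
      simpa using this
  · intro K hK
    by_contra hne
    exact hkey K hK hne
end

section
/- Assume V ≥ p(S) and condition (SOLV). Suppose the Liquidity Event game has at least one pure strategy Nash equilibrium, and let K* be a Nash equilibrium satisfying g(K*) ≥ g(K) for every Nash equilibrium K. Then K* is an optimum Nash equilibrium: for every Nash equilibrium K and every player i ∈ S, U_i(K) ≤ U_i(K*). -/
open Finset

variable {ι : Type*} [DecidableEq ι]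

/-- under `V ≥ p(S)` and (SOLV), any Nash equilibrium `K*` maximizing `g`
among Nash equilibria is an optimum Nash equilibrium. -/
theorem stmt1_optimum_nash
    (S : Finset ι) (hS : S.Nonempty)
    (V β : ℝ) (hV : 0 < V) (hβ : 0 < β)
    (p γ α : ι → ℝ)
    (hp : ∀ i ∈ S, 0 < p i) (hγ : ∀ i ∈ S, 0 < γ i) (hα : ∀ i ∈ S, 0 ≤ α i)
    (hge : psum p S ≤ V)
    (hsolv : ∀ i ∈ S, γ i * α i ≤ p i)
    (Kstar : Finset ι) (hKstar : isNash S V β p γ α Kstar)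
    (hmax : ∀ K : Finset ι, isNash S V β p γ α K →
      gval S V β p α K ≤ gval S V β p α Kstar) :
    ∀ K : Finset ι, isNash S V β p γ α K →
      ∀ i ∈ S, payout S V β p γ α K i ≤ payout S V β p γ α Kstar i := by
  have hpV : ∀ X : Finset ι, X ⊆ S → psum p X ≤ V := by
    intro X hX
    refine le_trans ?_ hge
    exact Finset.sum_le_sum_of_subset_of_nonneg hX (fun j hj _ => (hp j hj).le)
  have hfpos : ∀ X : Finset ι, 0 < fval β α (S \ X) := by
    intro X
    have h : (0:ℝ) ≤ ∑ i ∈ S \ X, α i :=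
      Finset.sum_nonneg fun j hj => hα j (Finset.mem_sdiff.1 hj).1
    unfold fval; linarith
  have hpay_in : ∀ (L : Finset ι) (j : ι), L ⊆ S → j ∈ L →
      payout S V β p γ α L j = p j := by
    intro L j hL hj
    simp [payout, hj, hpV L hL]
  have hpay_out : ∀ (L : Finset ι) (j : ι), L ⊆ S → j ∉ L →
      payout S V β p γ α L j
        = (p j / (γ j * fval β α (S \ L))) * (V - psum p L) := by
    intro L j hL hj
    simp [payout, hj, min_eq_left (hpV L hL)]
  -- converter's Nash inequality: γ j ≤ g(L)
  have hconv : ∀ (L : Finset ι) (j : ι), isNash S V β p γ α L → j ∈ S → j ∉ L →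
      γ j ≤ gval S V β p α L := by
    intro L j hL hjS hjL
    obtain ⟨hLs, hLn⟩ := hL
    have hdev := hLn j hjS
    rw [deviate, if_neg hjL] at hdev
    rw [hpay_in _ _ (Finset.insert_subset hjS hLs) (Finset.mem_insert_self j L),
        hpay_out L j hLs hjL] at hdev
    have hf := hfpos L
    have hγj := hγ j hjS
    have hpj := hp j hjS
    have hc : 0 < γ j * fval β α (S \ L) := mul_pos hγj hf
    have h1 : γ j * fval β α (S \ L) ≤ V - psum p L := by
      have h2 : p j * (γ j * fval β α (S \ L)) ≤ p j * (V - psum p L) := by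
        have := mul_le_mul_of_nonneg_right hdev hc.le
        calc p j * (γ j * fval β α (S \ L)) ≤
            p j / (γ j * fval β α (S \ L)) * (V - psum p L)
              * (γ j * fval β α (S \ L)) := by linarith
          _ = p j * (V - psum p L) := by field_simp; try ring
      exact le_of_mul_le_mul_left h2 hpj
    rw [gval, le_div_iff₀ hf]
    linarith
  -- casher's Nash inequality (with SOLV): g(L) ≤ γ j
  have hcash : ∀ (L : Finset ι) (j : ι), isNash S V β p γ α L → j ∈ S → j ∈ L →
      gval S V β p α L ≤ γ j := by
    intro L j hL hjS hjL
    obtain ⟨hLs, hLn⟩ := hL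
    have hdev := hLn j hjS
    rw [deviate, if_pos hjL] at hdev
    have hjE : j ∉ L.erase j := Finset.notMem_erase j L
    rw [hpay_in L j hLs hjL, hpay_out (L.erase j) j (Finset.Subset.trans (Finset.erase_subset j L) hLs) hjE] at hdev
    have hsd : S \ L.erase j = insert j (S \ L) := Finset.sdiff_erase hjS
    have hjSD : j ∉ S \ L := fun h => (Finset.mem_sdiff.1 h).2 hjL
    have hfe : fval β α (S \ L.erase j) = α j + fval β α (S \ L) := by
      rw [hsd]; unfold fval; rw [Finset.sum_insert hjSD]; ring
    have hpe : psum p (L.erase j) = psum p L - p j := by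
      unfold psum; exact Finset.sum_erase_eq_sub hjL
    rw [hfe, hpe] at hdev
    have hf := hfpos L
    have hγj := hγ j hjS
    have hpj := hp j hjS
    have hαj := hα j hjS
    have hc : 0 < γ j * (α j + fval β α (S \ L)) := mul_pos hγj (by linarith)
    have h1 : V - (psum p L - p j) ≤ γ j * (α j + fval β α (S \ L)) := by
      have h2 : p j * (V - (psum p L - p j)) ≤ p j * (γ j * (α j + fval β α (S \ L))) := by
        have := mul_le_mul_of_nonneg_right hdev hc.le
        calc p j * (V - (psum p L - p j))
            = p j / (γ j * (α j + fval β α (S \ L))) * (V - (psum p L - p j))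
              * (γ j * (α j + fval β α (S \ L))) := by field_simp; try ring
          _ ≤ p j * (γ j * (α j + fval β α (S \ L))) := by linarith
      exact le_of_mul_le_mul_left h2 hpj
    have hsj := hsolv j hjS
    rw [gval, div_le_iff₀ hf]
    nlinarith
  -- main case analysis
  intro K hK i hi
  have hKs := hK.1
  have hKs' := hKstar.1
  have hgK := hmax K hK
  by_cases hiK : i ∈ K <;> by_cases hiK' : i ∈ Kstar
  · rw [hpay_in K i hKs hiK, hpay_in Kstar i hKs' hiK']
  · -- i cashes in K, converts in K*: γ i ≤ g(K*)
    rw [hpay_in K i hKs hiK, hpay_out Kstar i hKs' hiK']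
    have h := hconv Kstar i hKstar hi hiK'
    rw [gval, le_div_iff₀ (hfpos Kstar)] at h
    have hf := hfpos Kstar
    have hγi := hγ i hi
    have hpi := hp i hi
    have hc : 0 < γ i * fval β α (S \ Kstar) := mul_pos hγi hf
    rw [div_mul_eq_mul_div, le_div_iff₀ hc]
    nlinarith
  · -- i converts in K, cashes in K*: g(K) ≤ g(K*) ≤ γ i
    rw [hpay_out K i hKs hiK, hpay_in Kstar i hKs' hiK']
    have h := (hgK.trans (hcash Kstar i hKstar hi hiK'))
    rw [gval, div_le_iff₀ (hfpos K)] at h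
    have hf := hfpos K
    have hγi := hγ i hi
    have hpi := hp i hi
    have hc : 0 < γ i * fval β α (S \ K) := mul_pos hγi hf
    rw [div_mul_eq_mul_div, div_le_iff₀ hc]
    nlinarith
  · -- converts in both
    rw [hpay_out K i hKs hiK, hpay_out Kstar i hKs' hiK']
    have hfK := hfpos K
    have hfK' := hfpos Kstar
    have hγi := hγ i hi
    have hpi := hp i hi
    have e1 : p i / (γ i * fval β α (S \ K)) * (V - psum p K)
        = (p i / γ i) * gval S V β p α K := by
      rw [gval]; field_simp; try ring
    have e2 : p i / (γ i * fval β α (S \ Kstar)) * (V - psum p Kstar)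
        = (p i / γ i) * gval S V β p α Kstar := by
      rw [gval]; field_simp; try ring
    rw [e1, e2]
    exact mul_le_mul_of_nonneg_left hgK (div_nonneg hpi.le hγi.le)
end

section
/- Assume V ≥ p(S) and condition (SOLV). If K is a pure strategy Nash equilibrium of the Liquidity Event game, then for every i ∈ K and every j ∈ K̄ one has γ_i ≥ γ_j; moreover, if in addition γ_i = γ_j, then p_i = γ_i·α_i and g(K) = γ_i. -/
open Finset

variable {ι : Type*} [DecidableEq ι]

/-- under `V ≥ p(S)` and (SOLV), in any Nash equilibrium `K`, cashing-out
players have `γ` at least that of converting players; with equality, `p_i = γ_i·α_i`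
and `g(K) = γ_i`. -/
theorem stmt2_gamma_order
    (S : Finset ι) (hS : S.Nonempty)
    (V β : ℝ) (hV : 0 < V) (hβ : 0 < β)
    (p γ α : ι → ℝ)
    (hp : ∀ i ∈ S, 0 < p i) (hγ : ∀ i ∈ S, 0 < γ i) (hα : ∀ i ∈ S, 0 ≤ α i)
    (hge : psum p S ≤ V)
    (hsolv : ∀ i ∈ S, γ i * α i ≤ p i)
    (K : Finset ι) (hK : isNash S V β p γ α K) :
    ∀ i ∈ K, ∀ j ∈ S \ K,
      γ j ≤ γ i ∧ (γ i = γ j → p i = γ i * α i ∧ gval S V β p α K = γ i) := by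
  obtain ⟨hKS, hNash⟩ := hK
  intro i hiK j hjSK
  have hiS : i ∈ S := hKS hiK
  obtain ⟨hjS, hjK⟩ := Finset.mem_sdiff.mp hjSK
  have hpnn : ∀ x ∈ S, 0 ≤ p x := fun x hx => (hp x hx).le
  have hsum_mono : ∀ X ⊆ S, psum p X ≤ psum p S := fun X hX =>
    Finset.sum_le_sum_of_subset_of_nonneg hX (fun x hx _ => hpnn x hx)
  have hpK : psum p K ≤ V := le_trans (hsum_mono K hKS) hge
  set F := fval β α (S \ K) with hFdef
  have hF : 0 < F := by
    have : 0 ≤ ∑ x ∈ S \ K, α x :=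
      Finset.sum_nonneg fun x hx => hα x (Finset.mem_sdiff.mp hx).1
    simp only [hFdef, fval]; linarith
  have hiSK : i ∉ S \ K := fun h => (Finset.mem_sdiff.mp h).2 hiK
  -- inequality for j : γ j * F ≤ V - psum p K
  have hj := hNash j hjS
  have hdevj : deviate K j = insert j K := by simp [deviate, hjK]
  have hpins : psum p (insert j K) ≤ V := le_trans (hsum_mono _ (by
    intro x hx
    rcases Finset.mem_insert.mp hx with h | h
    · exact h ▸ hjS
    · exact hKS h)) hge
  rw [hdevj] at hj
  have hjpay1 : payout S V β p γ α (insert j K) j = p j := by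
    simp [payout, hpins]
  have hjpay2 : payout S V β p γ α K j
      = (p j / (γ j * F)) * (V - psum p K) := by
    simp [payout, hjK, min_eq_left hpK]
    exact Or.inl rfl
  rw [hjpay1, hjpay2] at hj
  have hγjF : 0 < γ j * F := mul_pos (hγ j hjS) hF
  have hjineq : γ j * F ≤ V - psum p K := by
    rw [div_mul_eq_mul_div, le_div_iff₀ hγjF] at hj
    exact le_of_mul_le_mul_left (by linarith [hj]) (hp j hjS)
  -- inequality for i : V - psum p K + p i ≤ γ i * (F + α i)
  have hi := hNash i hiS
  have hdevi : deviate K i = K.erase i := by simp [deviate, hiK]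
  rw [hdevi] at hi
  have hperase : psum p (K.erase i) = psum p K - p i := by
    simp [psum, Finset.sum_erase_eq_sub hiK]
  have hperaseV : psum p (K.erase i) ≤ V := by
    rw [hperase]; linarith [hp i hiS]
  have hsde : S \ K.erase i = insert i (S \ K) := Finset.sdiff_erase hiS
  have hfval : fval β α (S \ K.erase i) = F + α i := by
    rw [hsde]
    simp only [hFdef, fval, Finset.sum_insert hiSK]
    ring
  have hipay1 : payout S V β p γ α (K.erase i) i
      = (p i / (γ i * (F + α i))) * (V - (psum p K - p i)) := by
    simp [payout, Finset.notMem_erase, hfval, min_eq_left hperaseV, hperase]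
    exact Or.inl (by linarith [hp i hiS])
  have hipay2 : payout S V β p γ α K i = p i := by
    simp [payout, hiK, hpK]
  rw [hipay1, hipay2] at hi
  have hγiD : 0 < γ i * (F + α i) := mul_pos (hγ i hiS) (by linarith [hα i hiS])
  have hiineq : V - (psum p K - p i) ≤ γ i * (F + α i) := by
    rw [div_mul_eq_mul_div, div_le_iff₀ hγiD] at hi
    nlinarith [hp i hiS, hi]
  have hsolvi := hsolv i hiS
  -- hence V - psum p K ≤ γ i * F
  have hiF : V - psum p K ≤ γ i * F := by nlinarith
  constructor
  · nlinarith
  · intro hEq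
    have h1 : γ i * F ≤ V - psum p K := hEq ▸ hjineq
    have hVpK : V - psum p K = γ i * F := le_antisymm hiF h1
    constructor
    · nlinarith
    · rw [gval, ← hFdef, hVpK, mul_div_assoc, div_self hF.ne', mul_one]
end

section
/- Assume V ≥ p(S). Then a strategy profile K ⊆ S is a pure strategy Nash equilibrium of the Liquidity Event game if and only if both of the following hold: (a) for every i ∈ K, p(K) − p_i + γ_i·f(K̄) + γ_i·α_i ≥ V; and (b) for every i ∈ K̄, p(K) + γ_i·f(K̄) ≤ V. -/
open Finset

variable {ι : Type*} [DecidableEq ι]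

/-- under `V ≥ p(S)`, `K ⊆ S` is a Nash equilibrium iff
(a) `p(K) − p_i + γ_i·f(K̄) + γ_i·α_i ≥ V` for all `i ∈ K`, and
(b) `p(K) + γ_i·f(K̄) ≤ V` for all `i ∈ K̄`. -/
theorem stmt3_nash_characterization
    (S : Finset ι) (hS : S.Nonempty)
    (V β : ℝ) (hV : 0 < V) (hβ : 0 < β)
    (p γ α : ι → ℝ)
    (hp : ∀ i ∈ S, 0 < p i) (hγ : ∀ i ∈ S, 0 < γ i) (hα : ∀ i ∈ S, 0 ≤ α i)
    (hge : psum p S ≤ V)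
    (K : Finset ι) (hKS : K ⊆ S) :
    isNash S V β p γ α K ↔
      ((∀ i ∈ K, psum p K - p i + γ i * fval β α (S \ K) + γ i * α i ≥ V) ∧
       (∀ i ∈ S \ K, psum p K + γ i * fval β α (S \ K) ≤ V)) := by
  classical
  have hfpos : ∀ X : Finset ι, X ⊆ S → 0 < fval β α X := by
    intro X hX
    have : (0:ℝ) ≤ ∑ i ∈ X, α i := Finset.sum_nonneg fun i hi => hα i (hX hi)
    unfold fval; linarith
  have hsub : ∀ X : Finset ι, X ⊆ S → psum p X ≤ V := by
    intro X hX
    refine le_trans ?_ hge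
    exact Finset.sum_le_sum_of_subset_of_nonneg hX (fun i hi _ => (hp i hi).le)
  have hpK : psum p K ≤ V := hsub K hKS
  have key : ∀ i ∈ S,
      ((payout S V β p γ α (deviate K i) i ≤ payout S V β p γ α K i) ↔
        (if i ∈ K then psum p K - p i + γ i * fval β α (S \ K) + γ i * α i ≥ V
         else psum p K + γ i * fval β α (S \ K) ≤ V)) := by
    intro i hiS
    have hpi := hp i hiS
    have hγi := hγ i hiS
    by_cases hi : i ∈ K
    · rw [if_pos hi]
      have hdev : deviate K i = K.erase i := if_pos hi
      have hie : i ∉ K.erase i := Finset.notMem_erase i K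
      have hpe : psum p (K.erase i) + p i = psum p K := by
        unfold psum; exact Finset.sum_erase_add K p hi
      have heKV : psum p (K.erase i) ≤ V := hsub _ ((Finset.erase_subset i K).trans hKS)
      have hset : S \ K.erase i = insert i (S \ K) := by
        ext x
        simp only [Finset.mem_sdiff, Finset.mem_erase, Finset.mem_insert]
        constructor
        · rintro ⟨hxS, hx⟩
          by_cases hxi : x = i
          · exact Or.inl hxi
          · exact Or.inr ⟨hxS, fun hxK => hx ⟨hxi, hxK⟩⟩
        · rintro (rfl | ⟨hxS, hxK⟩)
          · exact ⟨hiS, fun h => h.1 rfl⟩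
          · exact ⟨hxS, fun h => hxK h.2⟩
      have hnotin : i ∉ S \ K := fun h => (Finset.mem_sdiff.mp h).2 hi
      have hfeq : fval β α (S \ K.erase i) = fval β α (S \ K) + α i := by
        rw [hset]; unfold fval; rw [Finset.sum_insert hnotin]; ring
      set F := fval β α (S \ K) with hF
      have hFpos : 0 < F := hfpos _ (Finset.sdiff_subset)
      have hαi := hα i hiS
      have hc : 0 < γ i * (F + α i) := by positivity
      rw [hdev]
      rw [payout, if_neg hie, payout, if_pos hi, if_pos hpK, hfeq,
        min_eq_left heKV]
      rw [div_mul_eq_mul_div, div_le_iff₀ hc]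
      constructor
      · intro h
        have h2 : V - psum p (K.erase i) ≤ γ i * (F + α i) :=
          le_of_mul_le_mul_left (by linarith) hpi
        nlinarith
      · intro h
        have h2 : V - psum p (K.erase i) ≤ γ i * (F + α i) := by nlinarith
        have := mul_le_mul_of_nonneg_left h2 hpi.le
        linarith
    · rw [if_neg hi]
      have hdev : deviate K i = insert i K := if_neg hi
      have hins : psum p (insert i K) ≤ V := by
        refine hsub _ (Finset.insert_subset hiS hKS)
      set F := fval β α (S \ K) with hF
      have hFpos : 0 < F := hfpos _ (Finset.sdiff_subset)
      have hc : 0 < γ i * F := by positivity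
      rw [hdev]
      rw [payout, if_pos (Finset.mem_insert_self i K), if_pos hins,
        payout, if_neg hi, min_eq_left hpK]
      rw [div_mul_eq_mul_div, le_div_iff₀ hc]
      constructor
      · intro h
        have h2 : γ i * F ≤ V - psum p K :=
          le_of_mul_le_mul_left (by linarith) hpi
        linarith
      · intro h
        have h2 : γ i * F ≤ V - psum p K := by linarith
        have := mul_le_mul_of_nonneg_left h2 hpi.le
        linarith
  constructor
  · rintro ⟨-, hnash⟩
    constructor
    · intro i hi
      have h := (key i (hKS hi)).mp (hnash i (hKS hi))
      rwa [if_pos hi] at h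
    · intro i hi
      have hiS := (Finset.mem_sdiff.mp hi).1
      have hiK := (Finset.mem_sdiff.mp hi).2
      have h := (key i hiS).mp (hnash i hiS)
      rwa [if_neg hiK] at h
  · rintro ⟨ha, hb⟩
    refine ⟨hKS, fun i hiS => ?_⟩
    by_cases hi : i ∈ K
    · exact (key i hiS).mpr (by rw [if_pos hi]; exact ha i hi)
    · exact (key i hiS).mpr (by
        rw [if_neg hi]; exact hb i (Finset.mem_sdiff.mpr ⟨hiS, hi⟩))
end

section
/- Assume V ≥ p(S). Fix i ∈ S and let E = {k ∈ S : γ_k = γ_i} and G = {k ∈ S : γ_k > γ_i}, and let Y ⊆ E. If p_k = γ_k·α_k for all k ∈ Y and g(G) = γ_i, then g(G ∪ Y) = g(G) and G ∪ Y ≈ G, i.e., U_k(G ∪ Y) = U_k(G) for every player k ∈ S. -/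
open Finset

variable {ι : Type*} [DecidableEq ι]

/-!
The hypothesis `g(G) = γ_i` says `V − p(G) = γ_i·f(S \ G)`. When a player `k` with
`p_k = γ_i·α_k` moves from converting to cashing out, both sides of this balance drop by
`p_k = γ_i·α_k`, so `G ∪ Y` is balanced at the same level `γ_i`. At any level `c ≥ 0`
cash-out is not rationed and a converter receives `p_k·c/γ_k` whatever the profile; for
`k ∈ Y` this is `p_k`, exactly what `k` gets by cashing out.
-/

section Balanced

variable {S K Y : Finset ι} {V β c : ℝ} {p γ α : ι → ℝ}

theorem fval_sdiff_pos (hβ : 0 < β) (hα : ∀ k ∈ S, 0 ≤ α k) : 0 < fval β α (S \ K) :=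
  add_pos_of_pos_of_nonneg hβ (sum_nonneg fun k hk => hα k (mem_sdiff.mp hk).1)

theorem gval_eq_iff (hf : fval β α (S \ K) ≠ 0) :
    gval S V β p α K = c ↔ V - psum p K = c * fval β α (S \ K) :=
  div_eq_iff hf

theorem sub_psum_union_eq_mul_fval (hY : Y ⊆ S \ K) (hpY : ∀ k ∈ Y, p k = c * α k)
    (h : V - psum p K = c * fval β α (S \ K)) :
    V - psum p (K ∪ Y) = c * fval β α (S \ (K ∪ Y)) := by
  have hdisj : Disjoint K Y := disjoint_left.mpr fun k hkK hkY => (mem_sdiff.mp (hY hkY)).2 hkK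
  have hpsum : psum p (K ∪ Y) = psum p K + c * ∑ k ∈ Y, α k := by
    rw [psum, sum_union hdisj, mul_sum, sum_congr rfl hpY, psum]
  have hfval : fval β α (S \ (K ∪ Y)) = fval β α (S \ K) - ∑ k ∈ Y, α k := by
    rw [fval, fval, sdiff_union_distrib, ← Finset.sdiff_sdiff_left', sum_sdiff_eq_sub hY,
      add_sub_assoc]
  rw [hpsum, hfval]
  linear_combination h

theorem payout_eq_ite (hc : 0 ≤ c) (hf : 0 < fval β α (S \ K))
    (h : V - psum p K = c * fval β α (S \ K)) (k : ι) :
    payout S V β p γ α K k = if k ∈ K then p k else p k * c / γ k := by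
  have hle : psum p K ≤ V := by nlinarith
  split_ifs with hk
  · simp only [payout, if_pos hk, if_pos hle]
  · rw [payout, if_neg hk, min_eq_left hle, h, div_mul_eq_mul_div, ← mul_assoc,
      mul_div_mul_right _ _ hf.ne']

end Balanced

theorem stmt5_nash_shift_equiv_general
    (S : Finset ι)
    (V β : ℝ) (hβ : 0 < β)
    (p γ α : ι → ℝ)
    (hγ : ∀ i ∈ S, 0 < γ i) (hα : ∀ i ∈ S, 0 ≤ α i)
    (i : ι) (hi : i ∈ S)
    (Y : Finset ι) (hYE : Y ⊆ S.filter (fun k => γ k = γ i))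
    (hpY : ∀ k ∈ Y, p k = γ k * α k)
    (hg : gval S V β p α (S.filter (fun k => γ i < γ k)) = γ i) :
    gval S V β p α (S.filter (fun k => γ i < γ k) ∪ Y)
        = gval S V β p α (S.filter (fun k => γ i < γ k)) ∧
    ∀ k ∈ S, payout S V β p γ α (S.filter (fun k => γ i < γ k) ∪ Y) k
        = payout S V β p γ α (S.filter (fun k => γ i < γ k)) k := by
  set G := S.filter (fun k => γ i < γ k)
  have hYγ : ∀ k ∈ Y, γ k = γ i := fun k hk => (mem_filter.mp (hYE hk)).2
  have hYG : Y ⊆ S \ G := fun k hk => by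
    have hkS := (mem_filter.mp (hYE hk)).1
    simp [G, hkS, hYγ k hk]
  have hfG : 0 < fval β α (S \ G) := fval_sdiff_pos hβ hα
  have hfGY : 0 < fval β α (S \ (G ∪ Y)) := fval_sdiff_pos hβ hα
  have hbalG := (gval_eq_iff hfG.ne').mp hg
  have hbalGY := sub_psum_union_eq_mul_fval hYG (fun k hk => by rw [hpY k hk, hYγ k hk]) hbalG
  refine ⟨by rw [(gval_eq_iff hfGY.ne').mpr hbalGY, hg], fun k _ => ?_⟩
  have hγi := hγ i hi
  rw [payout_eq_ite hγi.le hfGY hbalGY, payout_eq_ite hγi.le hfG hbalG]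
  by_cases hkY : k ∈ Y
  · rw [hYγ k hkY, mul_div_cancel_right₀ _ hγi.ne']
    simp [hkY]
  · simp [hkY]

/-- under `V ≥ p(S)`, if `Y ⊆ E = {k : γ_k = γ_i}`, `p_k = γ_k·α_k` on `Y`
and `g(G) = γ_i` (`G = {k : γ_k > γ_i}`), then `g(G ∪ Y) = g(G)` and `G ∪ Y ≈ G`. -/
theorem stmt5_nash_shift_equiv
    (S : Finset ι) (hS : S.Nonempty)
    (V β : ℝ) (hV : 0 < V) (hβ : 0 < β)
    (p γ α : ι → ℝ)
    (hp : ∀ i ∈ S, 0 < p i) (hγ : ∀ i ∈ S, 0 < γ i) (hα : ∀ i ∈ S, 0 ≤ α i)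
    (hge : psum p S ≤ V)
    (i : ι) (hi : i ∈ S)
    (Y : Finset ι) (hYE : Y ⊆ S.filter (fun k => γ k = γ i))
    (hpY : ∀ k ∈ Y, p k = γ k * α k)
    (hg : gval S V β p α (S.filter (fun k => γ i < γ k)) = γ i) :
    gval S V β p α (S.filter (fun k => γ i < γ k) ∪ Y)
        = gval S V β p α (S.filter (fun k => γ i < γ k)) ∧
    ∀ k ∈ S, payout S V β p γ α (S.filter (fun k => γ i < γ k) ∪ Y) k
        = payout S V β p γ α (S.filter (fun k => γ i < γ k)) k :=
  stmt5_nash_shift_equiv_general S V β hβ p γ α hγ hα i hi Y hYE hpY hg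
end

section
/- Assume V ≥ p(S) and that p_i = γ_i·α_i for all i ∈ S. Then the Liquidity Event game has at least one pure strategy Nash equilibrium. -/
open Finset

variable {ι : Type*} [DecidableEq ι]

lemma fval_sub_insert (β : ℝ) (α : ι → ℝ) {S K : Finset ι} {i : ι}
    (hi : i ∈ S) (hiK : i ∉ K) :
    fval β α (S \ insert i K) = fval β α (S \ K) - α i := by
  have hsd : S \ insert i K = (S \ K).erase i := by
    ext x; simp [Finset.mem_sdiff, Finset.mem_erase, Finset.mem_insert]; tauto
  have hmem : i ∈ S \ K := Finset.mem_sdiff.mpr ⟨hi, hiK⟩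
  rw [hsd]
  unfold fval
  rw [Finset.sum_erase_eq_sub hmem]
  ring

lemma psum_insert' (p : ι → ℝ) {K : Finset ι} {i : ι} (hiK : i ∉ K) :
    psum p (insert i K) = p i + psum p K := by
  unfold psum; rw [Finset.sum_insert hiK]

lemma gval_insert_iffs (S : Finset ι) (V β : ℝ) (p α : ι → ℝ) (γ : ι → ℝ)
    {K : Finset ι} {i : ι} (hi : i ∈ S) (hiK : i ∉ K)
    (hf1 : 0 < fval β α (S \ insert i K)) (hαi : 0 < α i)
    (hpγα : p i = γ i * α i) :
    (gval S V β p α K < gval S V β p α (insert i K) ↔ γ i < gval S V β p α K) ∧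
    (gval S V β p α (insert i K) < gval S V β p α K ↔ gval S V β p α K < γ i) := by
  have hf0 : fval β α (S \ K) = fval β α (S \ insert i K) + α i := by
    rw [fval_sub_insert β α hi hiK]; ring
  set f1 := fval β α (S \ insert i K) with hf1def
  have hf0pos : (0:ℝ) < f1 + α i := by linarith
  unfold gval
  rw [hf0, psum_insert' p hiK, hpγα]
  set N := V - psum p K with hN
  have e1 : V - (γ i * α i + psum p K) = N - γ i * α i := by rw [hN]; ring
  rw [e1]
  constructor
  · rw [div_lt_div_iff₀ hf0pos hf1, lt_div_iff₀ hf0pos]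
    constructor <;> intro h <;> nlinarith
  · rw [div_lt_div_iff₀ hf1 hf0pos, div_lt_iff₀ hf0pos]
    constructor <;> intro h <;> nlinarith

/-- pre-money case (`p_i = γ_i·α_i` everywhere) with `V ≥ p(S)`:
a pure strategy Nash equilibrium exists. -/
theorem stmt7_pre_money_nash_exists
    (S : Finset ι) (hS : S.Nonempty)
    (V β : ℝ) (hV : 0 < V) (hβ : 0 < β)
    (p γ α : ι → ℝ)
    (hp : ∀ i ∈ S, 0 < p i) (hγ : ∀ i ∈ S, 0 < γ i) (hα : ∀ i ∈ S, 0 ≤ α i)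
    (hge : psum p S ≤ V)
    (hpre : ∀ i ∈ S, p i = γ i * α i) :
    ∃ K : Finset ι, isNash S V β p γ α K := by
  classical
  obtain ⟨K, hKp, hKmin⟩ := S.powerset.exists_min_image (gval S V β p α)
    ⟨∅, Finset.empty_mem_powerset S⟩
  rw [Finset.mem_powerset] at hKp
  have hαpos : ∀ i ∈ S, 0 < α i := by
    intro i hi
    have h1 := hp i hi
    rw [hpre i hi] at h1
    nlinarith [hγ i hi]
  have hpsub : ∀ X ⊆ S, psum p X ≤ V := by
    intro X hX
    refine le_trans ?_ hge
    exact Finset.sum_le_sum_of_subset_of_nonneg hX (fun i hi _ => (hp i hi).le)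
  have hfpos : ∀ X ⊆ S, 0 < fval β α X := by
    intro X hX
    have : 0 ≤ ∑ i ∈ X, α i := Finset.sum_nonneg fun i hi => hα i (hX hi)
    unfold fval; linarith
  refine ⟨K, hKp, fun i hi => ?_⟩
  by_cases hiK : i ∈ K
  · -- i ∈ K : cash out; payoff p i
    have hK' : K.erase i ⊆ S := (Finset.erase_subset _ _).trans hKp
    have hiK' : i ∉ K.erase i := Finset.notMem_erase i K
    have hins : insert i (K.erase i) = K := Finset.insert_erase hiK
    have hf1 : 0 < fval β α (S \ insert i (K.erase i)) := by
      rw [hins]; exact hfpos _ (Finset.sdiff_subset)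
    have h1 : payout S V β p γ α K i = p i := by
      simp [payout, hiK, hpsub K hKp]
    have hdev : deviate K i = K.erase i := if_pos hiK
    have h2 : payout S V β p γ α (deviate K i) i
        = α i * gval S V β p α (K.erase i) := by
      rw [hdev, payout, if_neg hiK', min_eq_left (hpsub _ hK'), gval, hpre i hi]
      have hγi := hγ i hi
      have hfp := hfpos _ (Finset.sdiff_subset : S \ K.erase i ⊆ S)
      field_simp
    rw [h1, h2]
    have hgle : gval S V β p α (K.erase i) ≤ γ i := by
      by_contra h
      push_neg at h
      have hiff := (gval_insert_iffs S V β p α γ hi hiK' hf1 (hαpos i hi)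
        (hpre i hi)).1
      have hlt : gval S V β p α (K.erase i) < gval S V β p α (insert i (K.erase i)) :=
        hiff.mpr h
      rw [hins] at hlt
      exact absurd (hKmin (K.erase i) (Finset.mem_powerset.mpr hK')) (not_le.mpr hlt)
    have := hαpos i hi
    rw [hpre i hi]
    nlinarith
  · -- i ∉ K : convert; payoff α i * g(K)
    have hKi : insert i K ⊆ S := Finset.insert_subset hi hKp
    have hf1 : 0 < fval β α (S \ insert i K) := hfpos _ (Finset.sdiff_subset)
    have h1 : payout S V β p γ α K i = α i * gval S V β p α K := by
      rw [payout, if_neg hiK, min_eq_left (hpsub K hKp), gval, hpre i hi]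
      have hγi := hγ i hi
      have hfp := hfpos _ (Finset.sdiff_subset : S \ K ⊆ S)
      field_simp
    have hdev : deviate K i = insert i K := if_neg hiK
    have h2 : payout S V β p γ α (deviate K i) i = p i := by
      rw [hdev]
      simp [payout, Finset.mem_insert_self, hpsub _ hKi]
    rw [h1, h2]
    have hgle : γ i ≤ gval S V β p α K := by
      by_contra h
      push_neg at h
      have hiff := (gval_insert_iffs S V β p α γ hi hiK hf1 (hαpos i hi)
        (hpre i hi)).2
      have hlt : gval S V β p α (insert i K) < gval S V β p α K := hiff.mpr h
      exact absurd (hKmin (insert i K) (Finset.mem_powerset.mpr hKi)) (not_le.mpr hlt)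
    have := hαpos i hi
    rw [hpre i hi]
    nlinarith
end

section
/- Assume V ≥ p(S) and that α_i = 0 for all i ∈ S. Then the Liquidity Event game has at least one pure strategy Nash equilibrium. -/
open Finset

variable {ι : Type*} [DecidableEq ι]

/-- post-money case (`α_i = 0` everywhere) with `V ≥ p(S)`:
a pure strategy Nash equilibrium exists. -/
theorem stmt8_post_money_nash_exists
    (S : Finset ι) (hS : S.Nonempty)
    (V β : ℝ) (hV : 0 < V) (hβ : 0 < β)
    (p γ α : ι → ℝ)
    (hp : ∀ i ∈ S, 0 < p i) (hγ : ∀ i ∈ S, 0 < γ i) (hα : ∀ i ∈ S, 0 ≤ α i)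
    (hge : psum p S ≤ V)
    (hpost : ∀ i ∈ S, α i = 0) :
    ∃ K : Finset ι, isNash S V β p γ α K := by
  classical
  have hp0 : ∀ i ∈ S, 0 ≤ p i := fun i hi => (hp i hi).le
  have hpsub : ∀ {A B : Finset ι}, A ⊆ B → B ⊆ S → psum p A ≤ psum p B := by
    intro A B hAB hBS
    exact Finset.sum_le_sum_of_subset_of_nonneg hAB (fun i hi _ => hp0 i (hBS hi))
  have hple : ∀ K : Finset ι, K ⊆ S → psum p K ≤ V :=
    fun K hK => (hpsub hK (le_refl S)).trans hge
  have hfβ : ∀ K : Finset ι, fval β α (S \ K) = β := by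
    intro K
    unfold fval
    rw [Finset.sum_eq_zero (fun i hi => hpost i (Finset.mem_sdiff.mp hi).1), add_zero]
  set F := S.powerset.filter (fun K => ∀ i ∈ K, V - psum p K + p i ≤ γ i * β) with hF
  set Kst := F.sup id with hKstdef
  have hmemF : ∀ K : Finset ι,
      K ∈ F ↔ K ⊆ S ∧ ∀ i ∈ K, V - psum p K + p i ≤ γ i * β := by
    intro K; simp [hF, Finset.mem_filter, Finset.mem_powerset]
  have hKS : Kst ⊆ S := Finset.sup_le (fun K hK => ((hmemF K).mp hK).1)
  have hPK : ∀ i ∈ Kst, V - psum p Kst + p i ≤ γ i * β := by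
    intro i hi
    obtain ⟨K, hKF, hiK⟩ := Finset.mem_sup.mp hi
    have h1 := ((hmemF K).mp hKF).2 i hiK
    have h2 : psum p K ≤ psum p Kst := hpsub (Finset.le_sup (f := id) hKF) hKS
    linarith
  have hout : ∀ i ∈ S, i ∉ Kst → γ i * β ≤ V - psum p Kst := by
    intro i hiS hiK
    by_contra hcon
    push_neg at hcon
    have hnew : insert i Kst ∈ F := by
      rw [hmemF]
      refine ⟨Finset.insert_subset hiS hKS, ?_⟩
      intro j hj
      have hpsins : psum p (insert i Kst) = p i + psum p Kst := by
        unfold psum; rw [Finset.sum_insert hiK]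
      rcases Finset.mem_insert.mp hj with rfl | hjK
      · rw [hpsins]; linarith
      · have h1 := hPK j hjK
        have h2 := hp0 i hiS
        rw [hpsins]; linarith
    exact hiK (Finset.le_sup (f := id) hnew (Finset.mem_insert_self i Kst))
  refine ⟨Kst, hKS, ?_⟩
  intro i hiS
  have hγi := hγ i hiS
  have hpi := hp i hiS
  have hA : 0 < γ i * β := mul_pos hγi hβ
  have hKle : psum p Kst ≤ V := hple Kst hKS
  by_cases hi : i ∈ Kst
  · -- i cashes out at Kst; payoff p i
    have hpay : payout S V β p γ α Kst i = p i := by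
      simp [payout, hi, hKle]
    have hdev : deviate Kst i = Kst.erase i := by simp [deviate, hi]
    have hErS : Kst.erase i ⊆ S := (Finset.erase_subset i Kst).trans hKS
    have hErle : psum p (Kst.erase i) ≤ V := hple _ hErS
    have hErval : psum p (Kst.erase i) = psum p Kst - p i := by
      unfold psum
      rw [Finset.sum_erase_eq_sub hi]
    have hni : i ∉ Kst.erase i := Finset.notMem_erase i Kst
    have hpay2 : payout S V β p γ α (Kst.erase i) i
        = (p i / (γ i * β)) * (V - psum p (Kst.erase i)) := by
      rw [payout, if_neg hni, hfβ, min_eq_left hErle]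
    rw [hpay, hdev, hpay2, hErval]
    have hX : V - (psum p Kst - p i) ≤ γ i * β := by
      have := hPK i hi; linarith
    calc (p i / (γ i * β)) * (V - (psum p Kst - p i))
        ≤ (p i / (γ i * β)) * (γ i * β) :=
          mul_le_mul_of_nonneg_left hX (by positivity)
      _ = p i := div_mul_cancel₀ _ (ne_of_gt hA)
  · -- i converts at Kst
    have hpay : payout S V β p γ α Kst i
        = (p i / (γ i * β)) * (V - psum p Kst) := by
      rw [payout, if_neg hi, hfβ, min_eq_left hKle]
    have hdev : deviate Kst i = insert i Kst := by simp [deviate, hi]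
    have hInsS : insert i Kst ⊆ S := Finset.insert_subset hiS hKS
    have hInsle : psum p (insert i Kst) ≤ V := hple _ hInsS
    have hpay2 : payout S V β p γ α (insert i Kst) i = p i := by
      simp [payout, Finset.mem_insert_self, hInsle]
    rw [hpay, hdev, hpay2]
    have hX : γ i * β ≤ V - psum p Kst := hout i hiS hi
    calc p i = (p i / (γ i * β)) * (γ i * β) := (div_mul_cancel₀ _ (ne_of_gt hA)).symm
      _ ≤ (p i / (γ i * β)) * (V - psum p Kst) :=
          mul_le_mul_of_nonneg_left hX (by positivity)
end

section
/- Assume V ≥ p(S) and that p_i = γ_i·α_i for all i ∈ S. Then a strategy profile K ⊆ S is a pure strategy Nash equilibrium of the Liquidity Event game if and only if both of the following hold: (a) for every i ∈ K, p(K) + γ_i·f(K̄) ≥ V; and (b) for every i ∈ K̄, p(K) + γ_i·f(K̄) ≤ V. -/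
open Finset

variable {ι : Type*} [DecidableEq ι]

lemma aux_le' (pi a t : ℝ) (hpi : 0 < pi) (ha : 0 < a) : (pi / a) * t ≤ pi ↔ t ≤ a := by
  rw [div_mul_eq_mul_div, div_le_iff₀ ha, mul_le_mul_iff_right₀ hpi]

lemma aux_ge' (pi a t : ℝ) (hpi : 0 < pi) (ha : 0 < a) : pi ≤ (pi / a) * t ↔ a ≤ t := by
  rw [div_mul_eq_mul_div, le_div_iff₀ ha, mul_le_mul_iff_right₀ hpi]

/-- pre-money case (`p_i = γ_i·α_i` everywhere) with `V ≥ p(S)`: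
`K ⊆ S` is a Nash equilibrium iff `p(K) + γ_i·f(K̄) ≥ V` for all `i ∈ K` and
`p(K) + γ_i·f(K̄) ≤ V` for all `i ∈ K̄`. -/
theorem stmt9_pre_money_characterization
    (S : Finset ι) (hS : S.Nonempty)
    (V β : ℝ) (hV : 0 < V) (hβ : 0 < β)
    (p γ α : ι → ℝ)
    (hp : ∀ i ∈ S, 0 < p i) (hγ : ∀ i ∈ S, 0 < γ i) (hα : ∀ i ∈ S, 0 ≤ α i)
    (hge : psum p S ≤ V)
    (hpre : ∀ i ∈ S, p i = γ i * α i)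
    (K : Finset ι) (hKS : K ⊆ S) :
    isNash S V β p γ α K ↔
      ((∀ i ∈ K, psum p K + γ i * fval β α (S \ K) ≥ V) ∧
       (∀ i ∈ S \ K, psum p K + γ i * fval β α (S \ K) ≤ V)) := by
  have hpnn : ∀ i ∈ S, 0 ≤ p i := fun i hi => (hp i hi).le
  have hpK : psum p K ≤ V :=
    le_trans (Finset.sum_le_sum_of_subset_of_nonneg hKS (fun i hi _ => hpnn i hi)) hge
  have hf0 : 0 < fval β α (S \ K) := by
    have : 0 ≤ ∑ i ∈ S \ K, α i :=
      Finset.sum_nonneg fun i hi => hα i (Finset.mem_sdiff.mp hi).1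
    unfold fval; linarith
  have key : ∀ i ∈ S,
      (payout S V β p γ α (deviate K i) i ≤ payout S V β p γ α K i ↔
        (if i ∈ K then psum p K + γ i * fval β α (S \ K) ≥ V
          else psum p K + γ i * fval β α (S \ K) ≤ V)) := by
    intro i hiS
    by_cases hi : i ∈ K
    · simp only [hi, if_true]
      have hdev : deviate K i = K.erase i := if_pos hi
      have hiK' : i ∉ K.erase i := Finset.notMem_erase i K
      have hSd : S \ K.erase i = insert i (S \ K) := by
        ext j
        simp only [Finset.mem_sdiff, Finset.mem_erase, Finset.mem_insert]
        by_cases hj : j = i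
        · subst hj; simp [hiS]
        · tauto
      have hpK' : psum p (K.erase i) = psum p K - p i := by
        unfold psum; rw [← Finset.sum_erase_add K p hi]; ring
      have hfd : fval β α (S \ K.erase i) = fval β α (S \ K) + α i := by
        rw [hSd]; unfold fval
        rw [Finset.sum_insert (by simp [Finset.mem_sdiff, hi])]; ring
      have hle : psum p (K.erase i) ≤ V := by
        rw [hpK']; have := hp i hiS; linarith
      have e1 : payout S V β p γ α K i = p i := by rw [payout, if_pos hi, if_pos hpK]
      have e2 : payout S V β p γ α (K.erase i) i =
          (p i / (γ i * (fval β α (S \ K) + α i))) * (V - (psum p K - p i)) := by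
        rw [payout, if_neg hiK', min_eq_left hle, hfd, hpK']
      have hapos : 0 < γ i * (fval β α (S \ K) + α i) :=
        mul_pos (hγ i hiS) (by have := hα i hiS; linarith)
      rw [hdev, e1, e2, aux_le' _ _ _ (hp i hiS) hapos, mul_add, ← hpre i hiS]
      constructor <;> intro h <;> linarith
    · simp only [hi, if_false]
      have hdev : deviate K i = insert i K := if_neg hi
      have hiK' : i ∈ insert i K := Finset.mem_insert_self i K
      have hpK' : psum p (insert i K) = p i + psum p K := by
        unfold psum; rw [Finset.sum_insert hi]
      have hle : psum p (insert i K) ≤ V :=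
        le_trans (Finset.sum_le_sum_of_subset_of_nonneg
          (Finset.insert_subset hiS hKS) (fun j hj _ => hpnn j hj)) hge
      have e1 : payout S V β p γ α K i =
          (p i / (γ i * fval β α (S \ K))) * (V - psum p K) := by
        rw [payout, if_neg hi, min_eq_left hpK]
      have e2 : payout S V β p γ α (insert i K) i = p i := by
        rw [payout, if_pos hiK', if_pos hle]
      have hapos : 0 < γ i * fval β α (S \ K) := mul_pos (hγ i hiS) hf0
      rw [hdev, e1, e2, aux_ge' _ _ _ (hp i hiS) hapos]
      constructor <;> intro h <;> linarith
  constructor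
  · rintro ⟨-, hnash⟩
    constructor
    · intro i hi
      have h := (key i (hKS hi)).mp (hnash i (hKS hi))
      simpa [hi] using h
    · intro i hi
      obtain ⟨hiS, hiK⟩ := Finset.mem_sdiff.mp hi
      have h := (key i hiS).mp (hnash i hiS)
      simpa [hiK] using h
  · rintro ⟨ha, hb⟩
    refine ⟨hKS, fun i hiS => ?_⟩
    rw [key i hiS]
    split_ifs with hi
    · exact ha i hi
    · exact hb i (Finset.mem_sdiff.mpr ⟨hiS, hi⟩)
end

section
/- Let γ be a real number and suppose p_k = γ_k·α_k for every k ∈ S with γ_k = γ. Let K = {k ∈ S : γ_k ≥ γ} and K' = {k ∈ S : γ_k > γ}. Then p(K) + γ·f(S \ K) = p(K') + γ·f(S \ K'). (In other words, the right endpoint of the Nash-equilibrium interval for the profile K equals the left endpoint of the interval for the profile K', which is the key step showing the intervals associated with the profiles K_γ cover the real line.) -/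
open Finset

variable {ι : Type*} [DecidableEq ι]

/-- if `p_k = γ_k·α_k` for all `k` with `γ_k = γ`, then the right endpoint
of the interval for `K = {k : γ_k ≥ γ}` equals the left endpoint of the interval for
`K' = {k : γ_k > γ}`. -/
theorem stmt10_interval_endpoints
    (S : Finset ι) (hS : S.Nonempty)
    (β : ℝ) (hβ : 0 < β)
    (p γ α : ι → ℝ)
    (hp : ∀ i ∈ S, 0 < p i) (hγ : ∀ i ∈ S, 0 < γ i) (hα : ∀ i ∈ S, 0 ≤ α i)
    (c : ℝ) (hpc : ∀ k ∈ S, γ k = c → p k = γ k * α k) :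
    psum p (S.filter (fun k => c ≤ γ k))
        + c * fval β α (S \ S.filter (fun k => c ≤ γ k))
      = psum p (S.filter (fun k => c < γ k))
        + c * fval β α (S \ S.filter (fun k => c < γ k)) := by
  classical
  set D := S.filter (fun k => γ k = c) with hD
  have hK : S.filter (fun k => c ≤ γ k) = S.filter (fun k => c < γ k) ∪ D := by
    ext k
    simp only [hD, Finset.mem_union, Finset.mem_filter]
    constructor
    · rintro ⟨hk, h⟩
      rcases lt_or_eq_of_le h with h' | h'
      · exact Or.inl ⟨hk, h'⟩
      · exact Or.inr ⟨hk, h'.symm⟩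
    · rintro (⟨hk, h⟩ | ⟨hk, h⟩)
      · exact ⟨hk, h.le⟩
      · exact ⟨hk, h.ge⟩
  have hSd : S \ S.filter (fun k => c < γ k) = (S \ S.filter (fun k => c ≤ γ k)) ∪ D := by
    ext k
    simp only [hD, Finset.mem_union, Finset.mem_sdiff, Finset.mem_filter, not_and, not_lt,
      not_le]
    constructor
    · rintro ⟨hk, h⟩
      rcases lt_or_eq_of_le (h hk) with h' | h'
      · exact Or.inl ⟨hk, fun _ => h'⟩
      · exact Or.inr ⟨hk, h'⟩
    · rintro (⟨hk, h⟩ | ⟨hk, h⟩)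
      · exact ⟨hk, fun _ => (h hk).le⟩
      · exact ⟨hk, fun _ => le_of_eq h⟩
  have hdisj1 : Disjoint (S.filter (fun k => c < γ k)) D := by
    rw [hD, Finset.disjoint_filter]
    intro k _ h h'
    exact absurd h' (ne_of_gt h)
  have hdisj2 : Disjoint (S \ S.filter (fun k => c ≤ γ k)) D := by
    rw [hD, Finset.disjoint_left]
    rintro k hk hk'
    simp only [Finset.mem_sdiff, Finset.mem_filter] at hk
    simp only [Finset.mem_filter] at hk'
    exact hk.2 ⟨hk.1, hk'.2.ge⟩
  have hpD : ∑ i ∈ D, p i = c * ∑ i ∈ D, α i := by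
    rw [Finset.mul_sum]
    apply Finset.sum_congr rfl
    intro i hi
    simp only [hD, Finset.mem_filter] at hi
    rw [hpc i hi.1 hi.2, hi.2]
  have h1 : psum p (S.filter (fun k => c ≤ γ k))
      = psum p (S.filter (fun k => c < γ k)) + ∑ i ∈ D, p i := by
    rw [psum, psum, hK, Finset.sum_union hdisj1]
  have h2 : fval β α (S \ S.filter (fun k => c < γ k))
      = fval β α (S \ S.filter (fun k => c ≤ γ k)) + ∑ i ∈ D, α i := by
    rw [fval, fval, hSd, Finset.sum_union hdisj2]
    ring
  rw [h1, h2, hpD]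
  ring
end

section
/- Let C be a finite nonempty set, let s > 0 be a real number, and for each i ∈ C let p_i > 0 and Cap_i > 0 be reals with Σ_{i∈C} p_i/Cap_i < 1. Suppose the reals (n_i)_{i∈C} satisfy the simultaneous equations n_i = (p_i/Cap_i)·(s + Σ_{j∈C} n_j) for every i ∈ C. Then the solution is uniquely determined: n_i = (p_i/Cap_i)·s/(1 − Σ_{j∈C} p_j/Cap_j) for each i ∈ C, the post-conversion capitalization satisfies s + Σ_{j∈C} n_j = s/(1 − Σ_{j∈C} p_j/Cap_j), and each converted holder's proportional share satisfies n_i/(s + Σ_{j∈C} n_j) = p_i/Cap_i. -/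
open Finset

/-- the simultaneous equations defining the Post-Money SAFE (Cap Only)
conversion share counts have a uniquely determined solution, with
`n_i = (p_i/Cap_i)·s/(1 − Σ p_j/Cap_j)`, post-conversion capitalization
`s/(1 − Σ p_j/Cap_j)`, and proportional share `p_i/Cap_i` for each converting SAFE. -/
theorem stmt11_post_money_conversion_solution
    {ι : Type*} [DecidableEq ι] (C : Finset ι) (hC : C.Nonempty)
    (s : ℝ) (hs : 0 < s)
    (p Cap : ι → ℝ)
    (hp : ∀ i ∈ C, 0 < p i) (hCap : ∀ i ∈ C, 0 < Cap i)
    (hsum : ∑ i ∈ C, p i / Cap i < 1)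
    (n : ι → ℝ)
    (hn : ∀ i ∈ C, n i = (p i / Cap i) * (s + ∑ j ∈ C, n j)) :
    (∀ i ∈ C, n i = (p i / Cap i) * s / (1 - ∑ j ∈ C, p j / Cap j)) ∧
    (s + ∑ j ∈ C, n j = s / (1 - ∑ j ∈ C, p j / Cap j)) ∧
    (∀ i ∈ C, n i / (s + ∑ j ∈ C, n j) = p i / Cap i) := by

  set r := ∑ j ∈ C, p j / Cap j with hr
  set T := ∑ j ∈ C, n j with hT
  have hr1 : 1 - r ≠ 0 := by
    have : r < 1 := hsum
    linarith
  have hsumT : T = r * (s + T) := by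
    rw [hT, hr, Finset.sum_mul]
    exact Finset.sum_congr rfl hn
  have hcap : s + T = s / (1 - r) := by
    field_simp
    linarith [hsumT]
  refine ⟨?_, hcap, ?_⟩
  · intro i hi
    rw [hn i hi, hcap]
    ring
  · intro i hi
    have hpos : 0 < s + T := by
      rw [hcap]
      have : 0 < 1 - r := by linarith
      positivity
    rw [hn i hi]
    rw [mul_div_assoc, div_self (ne_of_gt hpos), mul_one]
end

section
/- Let n ≥ 1 and consider the Liquidity Event game with S = {1, …, n}, V = n + 1, β = 1, and p_i = α_i = γ_i = 1 for every i ∈ S. Then every subset K ⊆ S is a pure strategy Nash equilibrium, and U_i(K) = 1 for every i ∈ S and every K ⊆ S. (In particular, there may be exponentially many Nash equilibria, all yielding the same payouts.) -/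
open Finset

variable {ι : Type*} [DecidableEq ι]

lemma pay_one_aux (n : ℕ) (K : Finset (Fin n)) (i : Fin n) :
    payout (Finset.univ : Finset (Fin n)) ((n : ℝ) + 1) 1
      (fun _ => 1) (fun _ => 1) (fun _ => 1) K i = 1 := by
  have hcard : (K.card : ℝ) ≤ n := by
    exact_mod_cast (K.card_le_univ).trans_eq (by simp)
  have hK' : K.card ≤ n := by simpa using K.card_le_univ
  have hsd : ((Finset.univ \ K).card : ℝ) = (n : ℝ) - K.card := by
    rw [card_sdiff_of_subset (subset_univ K), card_univ, Fintype.card_fin, Nat.cast_sub hK']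
  unfold payout psum fval
  simp only [Finset.sum_const, nsmul_eq_mul, mul_one, one_mul]
  split_ifs with h1 h2
  · rfl
  · exact absurd (by linarith : (K.card : ℝ) ≤ (n : ℝ) + 1) h2
  · rw [hsd, min_eq_left (by linarith)]
    have hpos : (1 : ℝ) + ((n : ℝ) - K.card) ≠ 0 := ne_of_gt (by linarith)
    field_simp
    ring

/-- with `n` players, `V = n + 1`, `β = 1`, `p_i = α_i = γ_i = 1`,
every profile `K` is a Nash equilibrium and every payout equals 1. -/
theorem stmt13_exponentially_many_equilibria (n : ℕ) (hn : 1 ≤ n) :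
    ∀ K : Finset (Fin n),
      isNash (Finset.univ : Finset (Fin n)) ((n : ℝ) + 1) 1
        (fun _ => 1) (fun _ => 1) (fun _ => 1) K ∧
      ∀ i : Fin n, payout (Finset.univ : Finset (Fin n)) ((n : ℝ) + 1) 1
        (fun _ => 1) (fun _ => 1) (fun _ => 1) K i = 1 := by
  intro K
  refine ⟨⟨subset_univ K, fun i _ => ?_⟩, fun i => pay_one_aux n K i⟩
  rw [pay_one_aux, pay_one_aux]
end

section
/- Assume condition (WD). If K is a pure strategy Nash equilibrium of the Liquidity Event game and i ∈ K̄ (player i converts), then p(K) < V and, moreover, p(K) + p_i < V. (That is, in any Nash equilibrium the cashing-out principal leaves strictly positive value for converters, and any single converter could have been fully cashed out in addition.) -/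
open Finset

variable {ι : Type*} [DecidableEq ι]

/-- under (WD), if `K` is a Nash equilibrium and `i ∈ K̄` converts, then
`p(K) < V` and even `p(K) + p_i < V`. -/
theorem stmt17_converter_headroom
    (S : Finset ι) (hS : S.Nonempty)
    (V β : ℝ) (hV : 0 < V) (hβ : 0 < β)
    (p γ α : ι → ℝ)
    (hp : ∀ i ∈ S, 0 < p i) (hγ : ∀ i ∈ S, 0 < γ i) (hα : ∀ i ∈ S, 0 ≤ α i)
    (hwd : WD S β p γ α)
    (K : Finset ι) (hK : isNash S V β p γ α K)
    (i : ι) (hi : i ∈ S \ K) :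
    psum p K < V ∧ psum p K + p i < V := by
  obtain ⟨hKS, hne⟩ := hK
  obtain ⟨hiS, hiK⟩ := Finset.mem_sdiff.mp hi
  have hpi := hp i hiS
  have hγi := hγ i hiS
  have hfC : 0 < fval β α (S \ K) := by
    have h0 : 0 ≤ ∑ j ∈ S \ K, α j :=
      Finset.sum_nonneg fun j hj => hα j (Finset.mem_sdiff.mp hj).1
    unfold fval; linarith
  have hpK0 : 0 ≤ psum p K :=
    Finset.sum_nonneg fun j hj => (hp j (hKS hj)).le
  have hratio : p i / (γ i * fval β α (S \ K)) < 1 := by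
    refine lt_of_le_of_lt ?_ (hwd (S \ K) Finset.sdiff_subset ⟨i, hi⟩)
    refine Finset.single_le_sum (f := fun j => p j / (γ j * fval β α (S \ K))) (fun j hj => ?_) hi
    have hjS := (Finset.mem_sdiff.mp hj).1
    exact div_nonneg (hp j hjS).le (mul_pos (hγ j hjS) hfC).le
  have hratio0 : 0 < p i / (γ i * fval β α (S \ K)) :=
    div_pos hpi (mul_pos hγi hfC)
  have hNi := hne i hiS
  have hdev : deviate K i = insert i K := by simp [deviate, hiK]
  rw [hdev] at hNi
  simp only [payout, if_neg hiK, if_pos (Finset.mem_insert_self i K)] at hNi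
  have hins : psum p (insert i K) = p i + psum p K := Finset.sum_insert hiK
  rw [hins] at hNi
  have hlt : psum p K < V := by
    by_contra h
    push_neg at h
    rw [min_eq_right h, sub_self, mul_zero] at hNi
    by_cases hc : p i + psum p K ≤ V
    · rw [if_pos hc] at hNi; linarith
    · rw [if_neg hc] at hNi
      push_neg at hc
      have : 0 < p i * V / (p i + psum p K) :=
        div_pos (mul_pos hpi hV) (by linarith)
      linarith
  refine ⟨hlt, ?_⟩
  by_contra h2
  push_neg at h2
  rw [min_eq_left hlt.le] at hNi
  have hUK : p i / (γ i * fval β α (S \ K)) * (V - psum p K) < V - psum p K := by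
    nlinarith
  by_cases hc : p i + psum p K ≤ V
  · rw [if_pos hc] at hNi; linarith
  · rw [if_neg hc] at hNi
    push_neg at hc
    have hd : 0 < p i + psum p K := by linarith
    have : V - psum p K ≤ p i * V / (p i + psum p K) := by
      rw [le_div_iff₀ hd]; nlinarith
    linarith
end

section
/- Assume V ≥ p(S) and that α_i = 0 for all i ∈ S (the Post-Money SAFE with Cap Only case). Then there exists an optimum pure strategy Nash equilibrium: a Nash equilibrium K* such that U_i(K) ≤ U_i(K*) for every Nash equilibrium K and every player i ∈ S. -/
open Finset

variable {ι : Type*} [DecidableEq ι]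

/-- post-money case (`α_i = 0` everywhere) with `V ≥ p(S)`:
there exists an optimum pure strategy Nash equilibrium. -/
theorem stmt19_post_money_optimum_exists
    (S : Finset ι) (hS : S.Nonempty)
    (V β : ℝ) (hV : 0 < V) (hβ : 0 < β)
    (p γ α : ι → ℝ)
    (hp : ∀ i ∈ S, 0 < p i) (hγ : ∀ i ∈ S, 0 < γ i) (hα : ∀ i ∈ S, 0 ≤ α i)
    (hge : psum p S ≤ V)
    (hpost : ∀ i ∈ S, α i = 0) :
    ∃ Kstar : Finset ι, isNash S V β p γ α Kstar ∧
      ∀ K : Finset ι, isNash S V β p γ α K →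
        ∀ i ∈ S, payout S V β p γ α K i ≤ payout S V β p γ α Kstar i := by

  classical
  have hp0 : ∀ i ∈ S, 0 ≤ p i := fun i hi => (hp i hi).le
  have psum_mono : ∀ {A B : Finset ι}, A ⊆ B → B ⊆ S → psum p A ≤ psum p B := by
    intro A B hAB hB
    exact Finset.sum_le_sum_of_subset_of_nonneg hAB (fun i hi _ => hp0 i (hB hi))
  have psum_le : ∀ {A : Finset ι}, A ⊆ S → psum p A ≤ V := by
    intro A hA
    exact le_trans (psum_mono hA (Finset.Subset.refl S)) hge
  have pay_in : ∀ {K : Finset ι}, K ⊆ S → ∀ {i : ι}, i ∈ K →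
      payout S V β p γ α K i = p i := by
    intro K hK i hi
    simp only [payout, if_pos hi, if_pos (psum_le hK)]
  have fval_eq : ∀ K : Finset ι, fval β α (S \ K) = β := by
    intro K
    unfold fval
    rw [Finset.sum_eq_zero (fun i hi => hpost i (Finset.mem_sdiff.mp hi).1), add_zero]
  have pay_out : ∀ {K : Finset ι}, K ⊆ S → ∀ {i : ι}, i ∉ K →
      payout S V β p γ α K i = p i / (γ i * β) * (V - psum p K) := by
    intro K hK i hi
    simp only [payout, if_neg hi, fval_eq, min_eq_left (psum_le hK)]
  have nash_of : ∀ {K : Finset ι}, K ⊆ S →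
      (∀ i ∈ S, i ∈ K → V - psum p (K.erase i) ≤ γ i * β) →
      (∀ i ∈ S, i ∉ K → γ i * β ≤ V - psum p K) →
      isNash S V β p γ α K := by
    intro K hK h1 h2
    refine ⟨hK, fun i hi => ?_⟩
    have hγβ : 0 < γ i * β := mul_pos (hγ i hi) hβ
    have hdiv : 0 ≤ p i / (γ i * β) := div_nonneg (hp0 i hi) hγβ.le
    by_cases hiK : i ∈ K
    · rw [deviate, if_pos hiK, pay_in hK hiK,
        pay_out (Finset.Subset.trans (Finset.erase_subset _ _) hK) (Finset.notMem_erase i K)]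
      calc p i / (γ i * β) * (V - psum p (K.erase i))
          ≤ p i / (γ i * β) * (γ i * β) :=
            mul_le_mul_of_nonneg_left (h1 i hi hiK) hdiv
        _ = p i := div_mul_cancel₀ _ hγβ.ne'
    · rw [deviate, if_neg hiK, pay_out hK hiK,
        pay_in (Finset.insert_subset hi hK) (Finset.mem_insert_self i K)]
      calc p i = p i / (γ i * β) * (γ i * β) := (div_mul_cancel₀ _ hγβ.ne').symm
        _ ≤ p i / (γ i * β) * (V - psum p K) :=
            mul_le_mul_of_nonneg_left (h2 i hi hiK) hdiv
  have nash_out : ∀ {K : Finset ι}, isNash S V β p γ α K →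
      ∀ i ∈ S, i ∉ K → γ i * β ≤ V - psum p K := by
    intro K hN i hi hiK
    have hcond := hN.2 i hi
    rw [deviate, if_neg hiK, pay_out hN.1 hiK,
      pay_in (Finset.insert_subset hi hN.1) (Finset.mem_insert_self i K)] at hcond
    have hγβ : 0 < γ i * β := mul_pos (hγ i hi) hβ
    by_contra h
    push_neg at h
    have hlt : p i / (γ i * β) * (V - psum p K) < p i / (γ i * β) * (γ i * β) :=
      mul_lt_mul_of_pos_left h (div_pos (hp i hi) hγβ)
    rw [div_mul_cancel₀ _ hγβ.ne'] at hlt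
    linarith
  -- the monotone map whose least fixed point is the optimum equilibrium
  set F : Finset ι → Finset ι :=
    fun A => S.filter (fun i => V - psum p (A.erase i) < γ i * β) with hF
  have memF : ∀ (A : Finset ι) (i : ι),
      i ∈ F A ↔ i ∈ S ∧ V - psum p (A.erase i) < γ i * β := by
    intro A i; rw [hF]; exact Finset.mem_filter
  have hFsub : ∀ A, F A ⊆ S := fun A => Finset.filter_subset _ _
  have hFmono : ∀ {A B : Finset ι}, A ⊆ B → B ⊆ S → F A ⊆ F B := by
    intro A B hAB hB i hiF
    rw [memF] at hiF ⊢
    refine ⟨hiF.1, lt_of_le_of_lt ?_ hiF.2⟩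
    have := psum_mono (Finset.erase_subset_erase i hAB)
      (Finset.Subset.trans (Finset.erase_subset _ _) hB)
    linarith
  have hFK : ∀ {A K : Finset ι}, isNash S V β p γ α K → A ⊆ K → F A ⊆ K := by
    intro A K hN hAK i hiF
    rw [memF] at hiF
    by_contra hiK
    have h1 := nash_out hN i hiF.1 hiK
    have h2 : psum p (A.erase i) ≤ psum p K :=
      psum_mono (Finset.Subset.trans (Finset.erase_subset _ _) hAK) hN.1
    linarith [hiF.2]
  set g : ℕ → Finset ι := fun n => F^[n] ∅ with hg
  have hg0 : g 0 = ∅ := rfl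
  have hgsucc : ∀ n, g (n + 1) = F (g n) := fun n => Function.iterate_succ_apply' F n ∅
  have hgS : ∀ n, g n ⊆ S := by
    intro n
    cases n with
    | zero => rw [hg0]; exact Finset.empty_subset S
    | succ n => rw [hgsucc]; exact hFsub _
  have hgmono : ∀ n, g n ⊆ g (n + 1) := by
    intro n
    induction n with
    | zero => rw [hg0]; exact Finset.empty_subset _
    | succ n ih =>
      rw [hgsucc (n+1), hgsucc n]
      exact hFmono (by rw [← hgsucc n]; exact ih) (hFsub _)
  have hfix : ∃ n, F (g n) = g n := by
    by_contra h
    push_neg at h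
    have hcard : ∀ n, n ≤ (g n).card := by
      intro n
      induction n with
      | zero => exact Nat.zero_le _
      | succ n ih =>
        have hss : g n ⊂ g (n + 1) := by
          refine Finset.ssubset_iff_subset_ne.mpr ⟨hgmono n, ?_⟩
          rw [hgsucc]
          exact fun he => h n he.symm
        have := Finset.card_lt_card hss
        omega
    have h1 := hcard (S.card + 1)
    have h2 := Finset.card_le_card (hgS (S.card + 1))
    omega
  obtain ⟨n, hn⟩ := hfix
  set Kstar := g n with hKdef
  have hKS : Kstar ⊆ S := hgS n
  have hNash : isNash S V β p γ α Kstar := by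
    apply nash_of hKS
    · intro i hi hiK
      have hmem : i ∈ F Kstar := by rw [hn]; exact hiK
      exact ((memF Kstar i).mp hmem).2.le
    · intro i hi hiK
      have hmem : i ∉ F Kstar := by rw [hn]; exact hiK
      rw [memF] at hmem
      push_neg at hmem
      have := hmem hi
      rw [Finset.erase_eq_of_notMem hiK] at this
      linarith
  have hmin : ∀ K : Finset ι, isNash S V β p γ α K → Kstar ⊆ K := by
    intro K hK
    have hall : ∀ m, g m ⊆ K := by
      intro m
      induction m with
      | zero => rw [hg0]; exact Finset.empty_subset _
      | succ m ih => rw [hgsucc]; exact hFK hK ih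
    exact hall n
  refine ⟨Kstar, hNash, ?_⟩
  intro K hK i hi
  have hsub := hmin K hK
  have hps : psum p Kstar ≤ psum p K := psum_mono hsub hK.1
  have hγβ : 0 < γ i * β := mul_pos (hγ i hi) hβ
  have hdiv : 0 ≤ p i / (γ i * β) := div_nonneg (hp0 i hi) hγβ.le
  by_cases h1 : i ∈ Kstar
  · rw [pay_in hK.1 (hsub h1), pay_in hKS h1]
  · by_cases h2 : i ∈ K
    · rw [pay_in hK.1 h2, pay_out hKS h1]
      have ht := nash_out hNash i hi h1
      calc p i = p i / (γ i * β) * (γ i * β) := (div_mul_cancel₀ _ hγβ.ne').symm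
        _ ≤ _ := mul_le_mul_of_nonneg_left ht hdiv
    · rw [pay_out hK.1 h2, pay_out hKS h1]
      exact mul_le_mul_of_nonneg_left (by linarith) hdiv
end
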